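/- Let (X, Y, Z, p_{Y,Z|X}) be a discrete memoryless WTC and let R ≥ 0 be achievable for it, i.e., there exist γ > 0, a PMF q_Z on Z, and a sequence of (n,R)-codes {c_n = (f_n,φ_n)}_{n∈ℕ} such that ‖P̃^{(c_n)}_{M,M̂,Z^n} − p^U_{M_n} 1{M̂=M} q_Z^n‖_TV ≤ e^{−nγ} for all sufficiently large n. For each n define g_n = P̃^{(c_n)}_{X^n|Z^n,M} and ψ_n = φ_n. Then: (1) b_n = (g_n, ψ_n) is an (n,R)-code for the GPC (Z, X, Y, q_Z, p_{Y|X,Z}); (2) the induced joint PMFs satisfy ‖P̃^{(c_n)} − Q̃^{(b_n)}‖_TV ≤ e^{−nγ} for all sufficiently large n; and (3) the error probability P_e(b_n) = ℙ_{Q̃^{(b_n)}}(M̂ ≠ M) tends to 0 as n → ∞, so that R is achievable for this GPC. -/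
import Mathlib


open scoped BigOperators Classical

noncomputable section

/-- Total variation distance between two PMFs on a finite set. -/
def tvDist {Ω : Type*} [Fintype Ω] (p q : Ω → ℝ) : ℝ :=
  (1 / 2) * ∑ x, |p x - q x|

/-- `p` is a probability mass function on the finite set `Ω`. -/
def IsPMF {Ω : Type*} [Fintype Ω] (p : Ω → ℝ) : Prop := (∀ x, 0 ≤ p x) ∧ ∑ x, p x = 1

/-- The message set `[1 : 2^{nR}]`, modelled as `Fin ⌈2^{nR}⌉`. -/
abbrev Msg (n : ℕ) (R : ℝ) : Type := Fin ⌈(2 : ℝ) ^ ((n : ℝ) * R)⌉₊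

/-- An `(n,R)`-code for the wiretap channel: a stochastic encoder `f_n : M_n → P(Xⁿ)`
(given by the data `enc`, required to be a transition kernel via `WTCCode.valid`) and a
decoder `φ_n : Yⁿ → M_n`. -/
structure WTCCode (X Y Z : Type) [Fintype X] [Fintype Y] [Fintype Z] (n : ℕ) (R : ℝ) where
  enc : Msg n R → (Fin n → X) → ℝ
  dec : (Fin n → Y) → Msg n R

/-- The encoder of a wiretap code is an honest stochastic map. -/
def WTCCode.valid {X Y Z : Type} [Fintype X] [Fintype Y] [Fintype Z] {n : ℕ} {R : ℝ}
    (c : WTCCode X Y Z n R) : Prop := ∀ m, IsPMF (c.enc m)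

/-- An `(n,R)`-code for the Gelfand-Pinsker channel: a stochastic encoder
`g_n : Zⁿ × M_n → P(Xⁿ)` (data `enc`, kernel property via `GPCCode.valid`) and a decoder
`ψ_n : Yⁿ → M_n`. -/
structure GPCCode (Z X Y : Type) [Fintype Z] [Fintype X] [Fintype Y] (n : ℕ) (R : ℝ) where
  enc : (Fin n → Z) → Msg n R → (Fin n → X) → ℝ
  dec : (Fin n → Y) → Msg n R

/-- The encoder of a Gelfand-Pinsker code is an honest stochastic map. -/
def GPCCode.valid {Z X Y : Type} [Fintype Z] [Fintype X] [Fintype Y] {n : ℕ} {R : ℝ}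
    (b : GPCCode Z X Y n R) : Prop := ∀ z m, IsPMF (b.enc z m)

variable {X Y Z : Type} [Fintype X] [Fintype Y] [Fintype Z] {n : ℕ} {R : ℝ}

/-- The joint PMF `P̃^{(c_n)}` on `M_n × Xⁿ × Yⁿ × Zⁿ × M_n` induced by an `(n,R)`-wiretap
code `c` over the memoryless WTC with transition kernel `W = p_{Y,Z|X}`:
`P̃(m,x,y,z,m̂) = |M_n|⁻¹ f_n(x|m) Π_i W(y_i,z_i|x_i) 1{m̂ = φ_n(y)}`. -/
def WTCCode.joint (W : X → Y × Z → ℝ) (c : WTCCode X Y Z n R) :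
    Msg n R × (Fin n → X) × (Fin n → Y) × (Fin n → Z) × Msg n R → ℝ := fun ω =>
  ((Fintype.card (Msg n R) : ℝ)⁻¹) * c.enc ω.1 ω.2.1
    * (∏ i, W (ω.2.1 i) (ω.2.2.1 i, ω.2.2.2.1 i))
    * (if c.dec ω.2.2.1 = ω.2.2.2.2 then 1 else 0)

/-- The marginal `P̃^{(c_n)}_{M,Zⁿ}`. -/
def WTCCode.margMZ (W : X → Y × Z → ℝ) (c : WTCCode X Y Z n R) :
    Msg n R × (Fin n → Z) → ℝ := fun ω =>
  ∑ x, ∑ y, ∑ mh, c.joint W (ω.1, x, y, ω.2, mh)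

/-- The marginal `P̃^{(c_n)}_{M,M̂,Zⁿ}` (recorded in the order `(M, Zⁿ, M̂)`). -/
def WTCCode.margMZM (W : X → Y × Z → ℝ) (c : WTCCode X Y Z n R) :
    Msg n R × (Fin n → Z) × Msg n R → ℝ := fun ω =>
  ∑ x, ∑ y, c.joint W (ω.1, x, y, ω.2.1, ω.2.2)

/-- The conditional marginal `p_{Y|X,Z}` of the WTC transition kernel `p_{Y,Z|X}`
(defined arbitrarily — uniform — where `p_{Z|X}(z|x) = 0`). -/
def condYgivenXZ (W : X → Y × Z → ℝ) : X → Z → Y → ℝ := fun x z y =>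
  if 0 < ∑ y', W x (y', z) then W x (y, z) / ∑ y', W x (y', z)
  else (Fintype.card Y : ℝ)⁻¹

/-- The stochastic Gelfand-Pinsker encoder `g_n = P̃^{(c_n)}_{Xⁿ|Zⁿ,M}` obtained from a
wiretap code `c` by conditioning its induced joint PMF on `(Zⁿ, M)` (defined arbitrarily —
uniform — where `P̃^{(c_n)}_{M,Zⁿ} = 0`). -/
def inducedGPEnc (W : X → Y × Z → ℝ) (c : WTCCode X Y Z n R) :
    (Fin n → Z) → Msg n R → (Fin n → X) → ℝ := fun z m x =>
  if 0 < c.margMZ W (m, z)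
  then (∑ y, ∑ mh, c.joint W (m, x, y, z, mh)) / c.margMZ W (m, z)
  else (Fintype.card (Fin n → X) : ℝ)⁻¹

/-- The Gelfand-Pinsker code `b_n = (g_n, ψ_n)` induced by a wiretap code `c_n = (f_n, φ_n)`:
`g_n = P̃^{(c_n)}_{Xⁿ|Zⁿ,M}` and `ψ_n = φ_n`. -/
def WTCCode.toGPC (W : X → Y × Z → ℝ) (c : WTCCode X Y Z n R) : GPCCode Z X Y n R where
  enc := inducedGPEnc W c
  dec := c.dec

/-- The joint PMF `Q̃^{(b_n)}` induced by an `(n,R)`-Gelfand-Pinsker code `b` over the GPC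
with state PMF `q_Z` and transition kernel `Wg = q_{Y|X,Z}`, recorded on the sample space
`M_n × Xⁿ × Yⁿ × Zⁿ × M_n` (the same ordering as `WTCCode.joint`, so that the two induced
distributions can be compared):
`Q̃(m,x,y,z,m̂) = q_Z^n(z) |M_n|⁻¹ g_n(x|z,m) Π_i Wg(y_i|x_i,z_i) 1{m̂ = ψ_n(y)}`. -/
def GPCCode.joint (qZ : Z → ℝ) (Wg : X → Z → Y → ℝ) (b : GPCCode Z X Y n R) :
    Msg n R × (Fin n → X) × (Fin n → Y) × (Fin n → Z) × Msg n R → ℝ := fun ω =>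
  (∏ i, qZ (ω.2.2.2.1 i)) * ((Fintype.card (Msg n R) : ℝ)⁻¹)
    * b.enc ω.2.2.2.1 ω.1 ω.2.1
    * (∏ i, Wg (ω.2.1 i) (ω.2.2.2.1 i) (ω.2.2.1 i))
    * (if b.dec ω.2.2.1 = ω.2.2.2.2 then 1 else 0)

/-- The error probability `ℙ_{Q̃^{(b_n)}}(M̂ ≠ M)` of a Gelfand-Pinsker code. -/
def GPCCode.errProb (qZ : Z → ℝ) (Wg : X → Z → Y → ℝ) (b : GPCCode Z X Y n R) : ℝ :=
  ∑ ω : Msg n R × (Fin n → X) × (Fin n → Y) × (Fin n → Z) × Msg n R,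
    if ω.2.2.2.2 ≠ ω.1 then b.joint qZ Wg ω else 0

/-- The target measure `p^U_{M_n} ⊗ q_Z^n` on `M_n × Zⁿ`. -/
def targetMZ (qZ : Z → ℝ) (n : ℕ) (R : ℝ) : Msg n R × (Fin n → Z) → ℝ := fun ω =>
  ((Fintype.card (Msg n R) : ℝ)⁻¹) * ∏ i, qZ (ω.2 i)

/-- The target measure `p^U_{M_n} · 1{M̂ = M} · q_Z^n` on `M_n × Zⁿ × M_n`. -/
def targetMZM (qZ : Z → ℝ) (n : ℕ) (R : ℝ) : Msg n R × (Fin n → Z) × Msg n R → ℝ :=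
  fun ω => ((Fintype.card (Msg n R) : ℝ)⁻¹) * (if ω.2.2 = ω.1 then 1 else 0)
    * ∏ i, qZ (ω.2.1 i)


/-! ### Auxiliary lemmas -/

section Aux

/-- `p_{Z|X}` -/
def pZX (W : X → Y × Z → ℝ) (x : X) (z : Z) : ℝ := ∑ y, W x (y, z)

lemma pZX_nonneg (W : X → Y × Z → ℝ) (hW : ∀ x, IsPMF (W x)) (x : X) (z : Z) :
    0 ≤ pZX W x z :=
  Finset.sum_nonneg fun y _ => (hW x).1 (y, z)

lemma condY_nonneg (W : X → Y × Z → ℝ) (hW : ∀ x, IsPMF (W x)) (x : X) (z : Z) (y : Y) :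
    0 ≤ condYgivenXZ W x z y := by
  unfold condYgivenXZ
  split
  · exact div_nonneg ((hW x).1 _) (le_of_lt (by assumption))
  · positivity

lemma W_factor (W : X → Y × Z → ℝ) (hW : ∀ x, IsPMF (W x)) (x : X) (z : Z) (y : Y) :
    W x (y, z) = pZX W x z * condYgivenXZ W x z y := by
  unfold condYgivenXZ pZX
  split
  · rename_i h
    rw [mul_comm, div_mul_cancel₀ _ (ne_of_gt h)]
  · rename_i h
    have hs : ∑ y', W x (y', z) = 0 :=
      le_antisymm (not_lt.mp h) (Finset.sum_nonneg fun y' _ => (hW x).1 (y', z))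
    have h0 : W x (y, z) = 0 :=
      (Finset.sum_eq_zero_iff_of_nonneg fun y' _ => (hW x).1 (y', z)).mp hs y (Finset.mem_univ y)
    rw [h0, hs, zero_mul]

lemma condY_sum (W : X → Y × Z → ℝ) (x : X) (hx : IsPMF (W x)) (z : Z) :
    ∑ y, condYgivenXZ W x z y = 1 := by
  have hYcard : (Fintype.card Y : ℝ) ≠ 0 := by
    rcases isEmpty_or_nonempty Y with h | h
    · exfalso
      have h2 := hx.2
      rw [Finset.univ_eq_empty, Finset.sum_empty] at h2
      norm_num at h2
    · exact Nat.cast_ne_zero.mpr Fintype.card_ne_zero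
  unfold condYgivenXZ
  by_cases h : 0 < ∑ y', W x (y', z)
  · simp only [if_pos h]
    rw [← Finset.sum_div, div_self (ne_of_gt h)]
  · simp only [if_neg h]
    rw [Finset.sum_const, Finset.card_univ, nsmul_eq_mul, mul_inv_cancel₀ hYcard]

lemma msg_nonempty (n : ℕ) (R : ℝ) : Nonempty (Msg n R) := by
  have : 0 < ⌈(2 : ℝ) ^ ((n : ℝ) * R)⌉₊ := Nat.ceil_pos.mpr (Real.rpow_pos_of_pos two_pos _)
  exact ⟨⟨0, this⟩⟩

lemma fn_nonempty (c : WTCCode X Y Z n R) (hc : c.valid) : Nonempty (Fin n → X) := by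
  obtain ⟨m⟩ := msg_nonempty n R
  rcases isEmpty_or_nonempty (Fin n → X) with h | h
  · exfalso
    have h2 := (hc m).2
    rw [Finset.univ_eq_empty, Finset.sum_empty] at h2
    norm_num at h2
  · exact h

lemma joint_nonneg (W : X → Y × Z → ℝ) (hW : ∀ x, IsPMF (W x)) (c : WTCCode X Y Z n R)
    (hc : c.valid) (ω : Msg n R × (Fin n → X) × (Fin n → Y) × (Fin n → Z) × Msg n R) :
    0 ≤ c.joint W ω := by
  unfold WTCCode.joint
  have h1 : (0:ℝ) ≤ (Fintype.card (Msg n R) : ℝ)⁻¹ := by positivity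
  have h2 := (hc ω.1).1 ω.2.1
  have h3 : (0:ℝ) ≤ ∏ i, W (ω.2.1 i) (ω.2.2.1 i, ω.2.2.2.1 i) :=
    Finset.prod_nonneg fun i _ => (hW _).1 _
  have h4 : (0:ℝ) ≤ (if c.dec ω.2.2.1 = ω.2.2.2.2 then (1:ℝ) else 0) := by positivity
  exact mul_nonneg (mul_nonneg (mul_nonneg h1 h2) h3) h4

lemma sum_prod_fn {β : Type} [Fintype β] (f : Fin n → β → ℝ) :
    ∑ y : Fin n → β, ∏ i, f i (y i) = ∏ i, ∑ b, f i b := by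
  rw [Finset.prod_univ_sum, Fintype.piFinset_univ]

lemma key_sum (W : X → Y × Z → ℝ) (c : WTCCode X Y Z n R)
    (m : Msg n R) (x : Fin n → X) (z : Fin n → Z) :
    ∑ y, ∑ mh, c.joint W (m, x, y, z, mh)
      = (Fintype.card (Msg n R) : ℝ)⁻¹ * c.enc m x * ∏ i, pZX W (x i) (z i) := by
  unfold WTCCode.joint
  simp only
  have h1 : ∀ y : Fin n → Y,
      ∑ mh : Msg n R, ((Fintype.card (Msg n R) : ℝ)⁻¹ * c.enc m x
        * ∏ i, W (x i) (y i, z i)) * (if c.dec y = mh then (1:ℝ) else 0)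
      = (Fintype.card (Msg n R) : ℝ)⁻¹ * c.enc m x * ∏ i, W (x i) (y i, z i) := by
    intro y
    rw [← Finset.mul_sum]
    simp
  simp only [h1]
  rw [← Finset.mul_sum, sum_prod_fn (fun i yi => W (x i) (yi, z i))]
  rfl

lemma margMZ_eq (W : X → Y × Z → ℝ) (c : WTCCode X Y Z n R) (m : Msg n R) (z : Fin n → Z) :
    c.margMZ W (m, z)
      = (Fintype.card (Msg n R) : ℝ)⁻¹ * ∑ x, c.enc m x * ∏ i, pZX W (x i) (z i) := by
  unfold WTCCode.margMZ
  rw [Finset.mul_sum]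
  refine Finset.sum_congr rfl fun x _ => ?_
  rw [key_sum]
  ring

lemma margMZ_nonneg (W : X → Y × Z → ℝ) (hW : ∀ x, IsPMF (W x)) (c : WTCCode X Y Z n R)
    (hc : c.valid) (m : Msg n R) (z : Fin n → Z) : 0 ≤ c.margMZ W (m, z) :=
  Finset.sum_nonneg fun _ _ => Finset.sum_nonneg fun _ _ => Finset.sum_nonneg fun _ _ =>
    joint_nonneg W hW c hc _

lemma joint_le_margMZ (W : X → Y × Z → ℝ) (hW : ∀ x, IsPMF (W x)) (c : WTCCode X Y Z n R)
    (hc : c.valid) (m : Msg n R) (x : Fin n → X) (y : Fin n → Y) (z : Fin n → Z)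
    (mh : Msg n R) : c.joint W (m, x, y, z, mh) ≤ c.margMZ W (m, z) := by
  have hnn := joint_nonneg W hW c hc
  calc c.joint W (m, x, y, z, mh)
      ≤ ∑ mh', c.joint W (m, x, y, z, mh') :=
        Finset.single_le_sum (f := fun mh' => c.joint W (m, x, y, z, mh'))
          (fun i _ => hnn _) (Finset.mem_univ mh)
    _ ≤ ∑ y', ∑ mh', c.joint W (m, x, y', z, mh') :=
        Finset.single_le_sum (f := fun y' => ∑ mh', c.joint W (m, x, y', z, mh'))
          (fun y' _ => Finset.sum_nonneg fun _ _ => hnn _) (Finset.mem_univ y)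
    _ ≤ ∑ x', ∑ y', ∑ mh', c.joint W (m, x', y', z, mh') :=
        Finset.single_le_sum (f := fun x' => ∑ y', ∑ mh', c.joint W (m, x', y', z, mh'))
          (fun x' _ => Finset.sum_nonneg fun _ _ => Finset.sum_nonneg fun _ _ => hnn _)
          (Finset.mem_univ x)
    _ = c.margMZ W (m, z) := rfl

lemma inducedGPEnc_nonneg (W : X → Y × Z → ℝ) (hW : ∀ x, IsPMF (W x))
    (c : WTCCode X Y Z n R) (hc : c.valid) (z : Fin n → Z) (m : Msg n R) (x : Fin n → X) :
    0 ≤ inducedGPEnc W c z m x := by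
  unfold inducedGPEnc
  split
  · exact div_nonneg
      (Finset.sum_nonneg fun _ _ => Finset.sum_nonneg fun _ _ => joint_nonneg W hW c hc _)
      (le_of_lt (by assumption))
  · positivity

lemma toGPC_valid (W : X → Y × Z → ℝ) (hW : ∀ x, IsPMF (W x)) (c : WTCCode X Y Z n R)
    (hc : c.valid) : (c.toGPC W).valid := by
  intro z m
  refine ⟨fun x => inducedGPEnc_nonneg W hW c hc z m x, ?_⟩
  show ∑ x, inducedGPEnc W c z m x = 1
  unfold inducedGPEnc
  by_cases h : 0 < c.margMZ W (m, z)
  · simp only [if_pos h]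
    rw [← Finset.sum_div]
    have hh : ∑ x, ∑ y, ∑ mh, c.joint W (m, x, y, z, mh) = c.margMZ W (m, z) := rfl
    rw [hh, div_self (ne_of_gt h)]
  · simp only [if_neg h]
    have hx := fn_nonempty c hc
    rw [Finset.sum_const, Finset.card_univ, nsmul_eq_mul, mul_inv_cancel₀]
    exact Nat.cast_ne_zero.mpr Fintype.card_ne_zero

lemma joint_factor (W : X → Y × Z → ℝ) (hW : ∀ x, IsPMF (W x)) (c : WTCCode X Y Z n R)
    (hc : c.valid) (m : Msg n R) (x : Fin n → X) (y : Fin n → Y) (z : Fin n → Z)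
    (mh : Msg n R) :
    c.joint W (m, x, y, z, mh)
      = c.margMZ W (m, z) * inducedGPEnc W c z m x
        * (∏ i, condYgivenXZ W (x i) (z i) (y i))
        * (if c.dec y = mh then 1 else 0) := by
  by_cases h : 0 < c.margMZ W (m, z)
  · simp only [inducedGPEnc, if_pos h]
    rw [key_sum]
    show (Fintype.card (Msg n R) : ℝ)⁻¹ * c.enc m x * (∏ i, W (x i) (y i, z i))
        * (if c.dec y = mh then 1 else 0) = _
    have hp : ∏ i, W (x i) (y i, z i)
        = (∏ i, pZX W (x i) (z i)) * ∏ i, condYgivenXZ W (x i) (z i) (y i) := by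
      rw [← Finset.prod_mul_distrib]
      exact Finset.prod_congr rfl fun i _ => W_factor W hW (x i) (z i) (y i)
    rw [hp]
    field_simp
  · have h0 : c.margMZ W (m, z) = 0 :=
      le_antisymm (not_lt.mp h) (margMZ_nonneg W hW c hc m z)
    rw [h0, zero_mul, zero_mul, zero_mul]
    exact le_antisymm (h0 ▸ joint_le_margMZ W hW c hc m x y z mh) (joint_nonneg W hW c hc _)

lemma gpc_joint_eq (W : X → Y × Z → ℝ) (c : WTCCode X Y Z n R) (qZ : Z → ℝ)
    (m : Msg n R) (x : Fin n → X) (y : Fin n → Y) (z : Fin n → Z) (mh : Msg n R) :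
    (c.toGPC W).joint qZ (condYgivenXZ W) (m, x, y, z, mh)
      = targetMZ qZ n R (m, z) * inducedGPEnc W c z m x
        * (∏ i, condYgivenXZ W (x i) (z i) (y i))
        * (if c.dec y = mh then 1 else 0) := by
  show (∏ i, qZ (z i)) * (Fintype.card (Msg n R) : ℝ)⁻¹ * inducedGPEnc W c z m x
      * (∏ i, condYgivenXZ W (x i) (z i) (y i)) * (if c.dec y = mh then 1 else 0) = _
  unfold targetMZ
  ring

lemma abs_sum_eq (W : X → Y × Z → ℝ) (hW : ∀ x, IsPMF (W x)) (c : WTCCode X Y Z n R)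
    (hc : c.valid) (qZ : Z → ℝ) :
    ∑ ω : Msg n R × (Fin n → X) × (Fin n → Y) × (Fin n → Z) × Msg n R,
      |c.joint W ω - (c.toGPC W).joint qZ (condYgivenXZ W) ω|
    = ∑ p : Msg n R × (Fin n → Z), |c.margMZ W p - targetMZ qZ n R p| := by
  simp only [Fintype.sum_prod_type]
  refine Finset.sum_congr rfl fun m _ => ?_
  have hpt : ∀ (x : Fin n → X) (y : Fin n → Y) (z : Fin n → Z) (mh : Msg n R),
      |c.joint W (m, x, y, z, mh) - (c.toGPC W).joint qZ (condYgivenXZ W) (m, x, y, z, mh)|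
      = |c.margMZ W (m, z) - targetMZ qZ n R (m, z)| * (inducedGPEnc W c z m x
        * ((∏ i, condYgivenXZ W (x i) (z i) (y i)) * (if c.dec y = mh then 1 else 0))) := by
    intro x y z mh
    rw [joint_factor W hW c hc m x y z mh, gpc_joint_eq W c qZ m x y z mh]
    have hre : c.margMZ W (m, z) * inducedGPEnc W c z m x
          * (∏ i, condYgivenXZ W (x i) (z i) (y i)) * (if c.dec y = mh then 1 else 0)
        - targetMZ qZ n R (m, z) * inducedGPEnc W c z m x
          * (∏ i, condYgivenXZ W (x i) (z i) (y i)) * (if c.dec y = mh then 1 else 0)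
        = (c.margMZ W (m, z) - targetMZ qZ n R (m, z)) * (inducedGPEnc W c z m x
          * ((∏ i, condYgivenXZ W (x i) (z i) (y i)) * (if c.dec y = mh then 1 else 0))) := by
      ring
    rw [hre, abs_mul]
    congr 1
    refine abs_of_nonneg (mul_nonneg (inducedGPEnc_nonneg W hW c hc z m x)
      (mul_nonneg (Finset.prod_nonneg fun i _ => condY_nonneg W hW (x i) (z i) (y i))
        (by positivity)))
  simp only [hpt]
  calc ∑ x, ∑ y, ∑ z, ∑ mh, |c.margMZ W (m, z) - targetMZ qZ n R (m, z)|
          * (inducedGPEnc W c z m x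
            * ((∏ i, condYgivenXZ W (x i) (z i) (y i)) * (if c.dec y = mh then 1 else 0)))
      = ∑ x, ∑ z, ∑ y, ∑ mh, |c.margMZ W (m, z) - targetMZ qZ n R (m, z)|
          * (inducedGPEnc W c z m x
            * ((∏ i, condYgivenXZ W (x i) (z i) (y i)) * (if c.dec y = mh then 1 else 0))) :=
        Finset.sum_congr rfl fun x _ => Finset.sum_comm
    _ = ∑ z, ∑ x, ∑ y, ∑ mh, |c.margMZ W (m, z) - targetMZ qZ n R (m, z)|
          * (inducedGPEnc W c z m x
            * ((∏ i, condYgivenXZ W (x i) (z i) (y i)) * (if c.dec y = mh then 1 else 0))) :=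
        Finset.sum_comm
    _ = ∑ z, |c.margMZ W (m, z) - targetMZ qZ n R (m, z)| := by
        refine Finset.sum_congr rfl fun z _ => ?_
        have hI : ∀ y : Fin n → Y,
            ∑ mh : Msg n R, (if c.dec y = mh then (1:ℝ) else 0) = 1 := by
          intro y; simp
        have hP : ∀ x : Fin n → X,
            ∑ y : Fin n → Y, ∏ i, condYgivenXZ W (x i) (z i) (y i) = 1 := by
          intro x
          rw [sum_prod_fn (fun i yi => condYgivenXZ W (x i) (z i) yi)]
          exact Finset.prod_eq_one fun i _ => condY_sum W (x i) (hW (x i)) (z i)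
        have hg : ∑ x, inducedGPEnc W c z m x = 1 := (toGPC_valid W hW c hc z m).2
        have step1 : ∀ (x : Fin n → X) (y : Fin n → Y),
            ∑ mh : Msg n R, |c.margMZ W (m, z) - targetMZ qZ n R (m, z)|
              * (inducedGPEnc W c z m x
                * ((∏ i, condYgivenXZ W (x i) (z i) (y i)) * (if c.dec y = mh then 1 else 0)))
            = |c.margMZ W (m, z) - targetMZ qZ n R (m, z)|
              * (inducedGPEnc W c z m x * (∏ i, condYgivenXZ W (x i) (z i) (y i))) := by
          intro x y
          have : ∀ mh : Msg n R,
              |c.margMZ W (m, z) - targetMZ qZ n R (m, z)|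
                * (inducedGPEnc W c z m x
                  * ((∏ i, condYgivenXZ W (x i) (z i) (y i)) * (if c.dec y = mh then 1 else 0)))
              = (|c.margMZ W (m, z) - targetMZ qZ n R (m, z)|
                * (inducedGPEnc W c z m x * (∏ i, condYgivenXZ W (x i) (z i) (y i))))
                * (if c.dec y = mh then 1 else 0) := fun mh => by ring
          simp only [this]
          rw [← Finset.mul_sum, hI, mul_one]
        have step2 : ∀ x : Fin n → X,
            ∑ y : Fin n → Y, |c.margMZ W (m, z) - targetMZ qZ n R (m, z)|
              * (inducedGPEnc W c z m x * (∏ i, condYgivenXZ W (x i) (z i) (y i)))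
            = |c.margMZ W (m, z) - targetMZ qZ n R (m, z)| * inducedGPEnc W c z m x := by
          intro x
          have : ∀ y : Fin n → Y,
              |c.margMZ W (m, z) - targetMZ qZ n R (m, z)|
                * (inducedGPEnc W c z m x * (∏ i, condYgivenXZ W (x i) (z i) (y i)))
              = (|c.margMZ W (m, z) - targetMZ qZ n R (m, z)| * inducedGPEnc W c z m x)
                * (∏ i, condYgivenXZ W (x i) (z i) (y i)) := fun y => by ring
          simp only [this]
          rw [← Finset.mul_sum, hP, mul_one]
        simp only [step1, step2]
        rw [← Finset.mul_sum, hg, mul_one]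

lemma tv_joint_eq (W : X → Y × Z → ℝ) (hW : ∀ x, IsPMF (W x)) (c : WTCCode X Y Z n R)
    (hc : c.valid) (qZ : Z → ℝ) :
    tvDist (c.joint W) ((c.toGPC W).joint qZ (condYgivenXZ W))
      = tvDist (c.margMZ W) (targetMZ qZ n R) := by
  unfold tvDist
  rw [abs_sum_eq W hW c hc qZ]

lemma margMZ_as_sum (W : X → Y × Z → ℝ) (c : WTCCode X Y Z n R) (m : Msg n R)
    (z : Fin n → Z) : c.margMZ W (m, z) = ∑ mh, c.margMZM W (m, z, mh) := by
  show ∑ x, ∑ y, ∑ mh, c.joint W (m, x, y, z, mh)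
      = ∑ mh, ∑ x, ∑ y, c.joint W (m, x, y, z, mh)
  calc ∑ x, ∑ y, ∑ mh, c.joint W (m, x, y, z, mh)
      = ∑ x, ∑ mh, ∑ y, c.joint W (m, x, y, z, mh) :=
        Finset.sum_congr rfl fun x _ => Finset.sum_comm
    _ = ∑ mh, ∑ x, ∑ y, c.joint W (m, x, y, z, mh) := Finset.sum_comm

lemma targetMZ_as_sum (qZ : Z → ℝ) (m : Msg n R) (z : Fin n → Z) :
    targetMZ qZ n R (m, z) = ∑ mh, targetMZM qZ n R (m, z, mh) := by
  unfold targetMZ targetMZM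
  simp only
  rw [← Finset.sum_mul]
  simp

lemma tv_marg_le (W : X → Y × Z → ℝ) (c : WTCCode X Y Z n R) (qZ : Z → ℝ) :
    tvDist (c.margMZ W) (targetMZ qZ n R)
      ≤ tvDist (c.margMZM W) (targetMZM qZ n R) := by
  unfold tvDist
  have h2 : ∑ p : Msg n R × (Fin n → Z), |c.margMZ W p - targetMZ qZ n R p|
      ≤ ∑ ω : Msg n R × (Fin n → Z) × Msg n R, |c.margMZM W ω - targetMZM qZ n R ω| := by
    simp only [Fintype.sum_prod_type]
    refine Finset.sum_le_sum fun m _ => Finset.sum_le_sum fun z _ => ?_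
    rw [margMZ_as_sum W c m z, targetMZ_as_sum qZ m z, ← Finset.sum_sub_distrib]
    exact Finset.abs_sum_le_sum_abs _ _
  have : (0:ℝ) ≤ 1/2 := by norm_num
  exact mul_le_mul_of_nonneg_left h2 this

lemma gpc_joint_nonneg (W : X → Y × Z → ℝ) (hW : ∀ x, IsPMF (W x)) (c : WTCCode X Y Z n R)
    (hc : c.valid) (qZ : Z → ℝ) (hqZ : IsPMF qZ)
    (ω : Msg n R × (Fin n → X) × (Fin n → Y) × (Fin n → Z) × Msg n R) :
    0 ≤ (c.toGPC W).joint qZ (condYgivenXZ W) ω := by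
  unfold GPCCode.joint
  have h0 : (0:ℝ) ≤ ∏ i, qZ (ω.2.2.2.1 i) := Finset.prod_nonneg fun i _ => hqZ.1 _
  have h1 : (0:ℝ) ≤ (Fintype.card (Msg n R) : ℝ)⁻¹ := by positivity
  have h2 : (0:ℝ) ≤ (c.toGPC W).enc ω.2.2.2.1 ω.1 ω.2.1 :=
    inducedGPEnc_nonneg W hW c hc _ _ _
  have h3 : (0:ℝ) ≤ ∏ i, condYgivenXZ W (ω.2.1 i) (ω.2.2.2.1 i) (ω.2.2.1 i) :=
    Finset.prod_nonneg fun i _ => condY_nonneg W hW _ _ _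
  have h4 : (0:ℝ) ≤ (if (c.toGPC W).dec ω.2.2.1 = ω.2.2.2.2 then (1:ℝ) else 0) := by
    positivity
  exact mul_nonneg (mul_nonneg (mul_nonneg (mul_nonneg h0 h1) h2) h3) h4

lemma errProb_nonneg (W : X → Y × Z → ℝ) (hW : ∀ x, IsPMF (W x)) (c : WTCCode X Y Z n R)
    (hc : c.valid) (qZ : Z → ℝ) (hqZ : IsPMF qZ) :
    0 ≤ (c.toGPC W).errProb qZ (condYgivenXZ W) := by
  refine Finset.sum_nonneg fun ω _ => ?_
  split
  · exact gpc_joint_nonneg W hW c hc qZ hqZ ω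
  · exact le_refl 0

lemma margMZM_nonneg (W : X → Y × Z → ℝ) (hW : ∀ x, IsPMF (W x)) (c : WTCCode X Y Z n R)
    (hc : c.valid) (ω : Msg n R × (Fin n → Z) × Msg n R) : 0 ≤ c.margMZM W ω :=
  Finset.sum_nonneg fun _ _ => Finset.sum_nonneg fun _ _ => joint_nonneg W hW c hc _

lemma wtc_err_le (W : X → Y × Z → ℝ) (hW : ∀ x, IsPMF (W x)) (c : WTCCode X Y Z n R)
    (hc : c.valid) (qZ : Z → ℝ) :
    ∑ ω : Msg n R × (Fin n → X) × (Fin n → Y) × (Fin n → Z) × Msg n R,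
      (if ω.2.2.2.2 ≠ ω.1 then c.joint W ω else 0)
    ≤ 2 * tvDist (c.margMZM W) (targetMZM qZ n R) := by
  have key : ∑ ω : Msg n R × (Fin n → X) × (Fin n → Y) × (Fin n → Z) × Msg n R,
      (if ω.2.2.2.2 ≠ ω.1 then c.joint W ω else 0)
      = ∑ m, ∑ z, ∑ mh, (if mh ≠ m then c.margMZM W (m, z, mh) else 0) := by
    simp only [Fintype.sum_prod_type]
    refine Finset.sum_congr rfl fun m _ => ?_
    calc ∑ x, ∑ y, ∑ z, ∑ mh, (if mh ≠ m then c.joint W (m, x, y, z, mh) else 0)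
        = ∑ x, ∑ z, ∑ y, ∑ mh, (if mh ≠ m then c.joint W (m, x, y, z, mh) else 0) :=
          Finset.sum_congr rfl fun x _ => Finset.sum_comm
      _ = ∑ z, ∑ x, ∑ y, ∑ mh, (if mh ≠ m then c.joint W (m, x, y, z, mh) else 0) :=
          Finset.sum_comm
      _ = ∑ z, ∑ x, ∑ mh, ∑ y, (if mh ≠ m then c.joint W (m, x, y, z, mh) else 0) :=
          Finset.sum_congr rfl fun z _ => Finset.sum_congr rfl fun x _ => Finset.sum_comm
      _ = ∑ z, ∑ mh, ∑ x, ∑ y, (if mh ≠ m then c.joint W (m, x, y, z, mh) else 0) :=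
          Finset.sum_congr rfl fun z _ => Finset.sum_comm
      _ = ∑ z, ∑ mh, (if mh ≠ m then c.margMZM W (m, z, mh) else 0) := by
          refine Finset.sum_congr rfl fun z _ => Finset.sum_congr rfl fun mh _ => ?_
          by_cases h : mh ≠ m
          · simp only [if_pos h]; rfl
          · simp only [if_neg h]; simp
  rw [key]
  have hb : ∀ (m : Msg n R) (z : Fin n → Z) (mh : Msg n R),
      (if mh ≠ m then c.margMZM W (m, z, mh) else 0)
      ≤ |c.margMZM W (m, z, mh) - targetMZM qZ n R (m, z, mh)| := by
    intro m z mh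
    by_cases h : mh ≠ m
    · simp only [if_pos h]
      have ht : targetMZM qZ n R (m, z, mh) = 0 := by
        unfold targetMZM
        simp only
        rw [if_neg h, mul_zero, zero_mul]
      rw [ht, sub_zero]
      exact le_abs_self _
    · simp only [if_neg h]
      exact abs_nonneg _
  calc ∑ m, ∑ z, ∑ mh, (if mh ≠ m then c.margMZM W (m, z, mh) else 0)
      ≤ ∑ m, ∑ z, ∑ mh, |c.margMZM W (m, z, mh) - targetMZM qZ n R (m, z, mh)| :=
        Finset.sum_le_sum fun m _ => Finset.sum_le_sum fun z _ =>
          Finset.sum_le_sum fun mh _ => hb m z mh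
    _ = 2 * tvDist (c.margMZM W) (targetMZM qZ n R) := by
        unfold tvDist
        simp only [Fintype.sum_prod_type]
        ring

lemma errProb_le (W : X → Y × Z → ℝ) (hW : ∀ x, IsPMF (W x)) (c : WTCCode X Y Z n R)
    (hc : c.valid) (qZ : Z → ℝ) (hqZ : IsPMF qZ) :
    (c.toGPC W).errProb qZ (condYgivenXZ W)
      ≤ 2 * tvDist (c.margMZM W) (targetMZM qZ n R)
        + 2 * tvDist (c.joint W) ((c.toGPC W).joint qZ (condYgivenXZ W)) := by
  have hpt : ∀ ω : Msg n R × (Fin n → X) × (Fin n → Y) × (Fin n → Z) × Msg n R,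
      (if ω.2.2.2.2 ≠ ω.1 then (c.toGPC W).joint qZ (condYgivenXZ W) ω else 0)
      ≤ (if ω.2.2.2.2 ≠ ω.1 then c.joint W ω else 0)
        + |c.joint W ω - (c.toGPC W).joint qZ (condYgivenXZ W) ω| := by
    intro ω
    by_cases h : ω.2.2.2.2 ≠ ω.1
    · simp only [if_pos h]
      linarith [neg_abs_le (c.joint W ω - (c.toGPC W).joint qZ (condYgivenXZ W) ω)]
    · simp only [if_neg h]
      positivity
  calc (c.toGPC W).errProb qZ (condYgivenXZ W)
      ≤ ∑ ω : Msg n R × (Fin n → X) × (Fin n → Y) × (Fin n → Z) × Msg n R,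
          ((if ω.2.2.2.2 ≠ ω.1 then c.joint W ω else 0)
            + |c.joint W ω - (c.toGPC W).joint qZ (condYgivenXZ W) ω|) :=
        Finset.sum_le_sum fun ω _ => hpt ω
    _ = (∑ ω : Msg n R × (Fin n → X) × (Fin n → Y) × (Fin n → Z) × Msg n R,
          (if ω.2.2.2.2 ≠ ω.1 then c.joint W ω else 0))
        + ∑ ω : Msg n R × (Fin n → X) × (Fin n → Y) × (Fin n → Z) × Msg n R,
          |c.joint W ω - (c.toGPC W).joint qZ (condYgivenXZ W) ω| := Finset.sum_add_distrib
    _ ≤ 2 * tvDist (c.margMZM W) (targetMZM qZ n R)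
        + 2 * tvDist (c.joint W) ((c.toGPC W).joint qZ (condYgivenXZ W)) := by
        refine add_le_add (wtc_err_le W hW c hc qZ) ?_
        unfold tvDist
        rw [two_mul]
        linarith [Finset.sum_nonneg (fun (ω : Msg n R × (Fin n → X) × (Fin n → Y) × (Fin n → Z) × Msg n R) (_ : ω ∈ Finset.univ) => abs_nonneg (c.joint W ω - (c.toGPC W).joint qZ (condYgivenXZ W) ω))]

end Aux

/-- **Good wiretap codes induce good Gelfand-Pinsker codes (Proposition 2).**
Suppose `R ≥ 0` is achievable for the WTC `p_{Y,Z|X}`: there are `γ > 0`, a PMF `q_Z` and a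
sequence of `(n,R)`-codes `c_n` with
`‖P̃^{(c_n)}_{M,M̂,Zⁿ} − p^U_{M_n} 1{M̂=M} q_Z^n‖_TV ≤ e^{−nγ}` for all large `n`.
Define `g_n = P̃^{(c_n)}_{Xⁿ|Zⁿ,M}` and `ψ_n = φ_n`.  Then:
(1) `b_n = (g_n, ψ_n)` is an `(n,R)`-code for the GPC `(q_Z, p_{Y|X,Z})`, i.e. each `g_n`
is a bona fide stochastic encoder; (2) `‖P̃^{(c_n)} − Q̃^{(b_n)}‖_TV ≤ e^{−nγ}` for all
sufficiently large `n`; (3) `P_e(b_n) = ℙ_{Q̃^{(b_n)}}(M̂ ≠ M) → 0`, i.e. `R` is achievable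
for that GPC. -/
theorem good_wiretap_codes_induce_good_GP_codes
    (W : X → Y × Z → ℝ) (hW : ∀ x, IsPMF (W x)) (hR : 0 ≤ R)
    (c : ∀ n : ℕ, WTCCode X Y Z n R) (hc : ∀ n, (c n).valid)
    (qZ : Z → ℝ) (hqZ : IsPMF qZ) (γ : ℝ) (hγ : 0 < γ)
    (hach : ∀ᶠ n in Filter.atTop,
      tvDist ((c n).margMZM W) (targetMZM qZ n R) ≤ Real.exp (-(n * γ))) :
    (∀ n, ((c n).toGPC W).valid) ∧
    (∀ᶠ n in Filter.atTop,
      tvDist ((c n).joint W) (((c n).toGPC W).joint qZ (condYgivenXZ W))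
        ≤ Real.exp (-(n * γ))) ∧
    Filter.Tendsto (fun n => ((c n).toGPC W).errProb qZ (condYgivenXZ W))
      Filter.atTop (nhds 0) := by
  have hval : ∀ n, ((c n).toGPC W).valid := fun n => toGPC_valid W hW (c n) (hc n)
  have htv : ∀ᶠ n in Filter.atTop,
      tvDist ((c n).joint W) (((c n).toGPC W).joint qZ (condYgivenXZ W))
        ≤ Real.exp (-(n * γ)) := by
    filter_upwards [hach] with n hn
    rw [tv_joint_eq W hW (c n) (hc n) qZ]
    exact le_trans (tv_marg_le W (c n) qZ) hn
  refine ⟨hval, htv, ?_⟩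
  have hexp : Filter.Tendsto (fun n : ℕ => Real.exp (-((n : ℝ) * γ)))
      Filter.atTop (nhds 0) := by
    refine Real.tendsto_exp_atBot.comp ?_
    exact Filter.tendsto_neg_atTop_atBot.comp
      (Filter.Tendsto.atTop_mul_const hγ tendsto_natCast_atTop_atTop)
  have hlim : Filter.Tendsto (fun n : ℕ => 4 * Real.exp (-((n : ℝ) * γ)))
      Filter.atTop (nhds 0) := by
    simpa using hexp.const_mul (4 : ℝ)
  refine squeeze_zero' ?_ ?_ hlim
  · exact Filter.Eventually.of_forall fun n => errProb_nonneg W hW (c n) (hc n) qZ hqZ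
  · filter_upwards [hach, htv] with n hn1 hn2
    have h1 := errProb_le W hW (c n) (hc n) qZ hqZ
    linarith

end
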